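/- arXiv:1904.02119 — 2 statements merged into one kernel-verified Lean document; each statement's English description precedes it below -/
import Mathlib

section
/- For any x, y, a, b ∈ ℝ and any finite sequence p : {0,...,m} → ℝ with p(0) = x, p(m) = y, a = min_k p(k) and b = max_k p(k), define z_i = p(i) - p(i-1). Then max_{k ∈ [m]} |∑_{i=1}^k z_i − ∑_{i=k+1}^m z_i| = max{2b − x − y, x + y − 2a}. -/
private lemma tele_sum (p : ℕ → ℝ) : ∀ k, ∑ i ∈ Finset.Icc 1 k, (p i - p (i - 1)) = p k - p 0 := by
  intro k
  induction k with
  | zero => simp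
  | succ n ih =>
      rw [Finset.sum_Icc_succ_top (Nat.succ_le_succ (Nat.zero_le n)), ih]
      simp

private lemma tele_sum2 (p : ℕ → ℝ) (k m : ℕ) (hk : k ≤ m) :
    ∑ i ∈ Finset.Icc (k + 1) m, (p i - p (i - 1)) = p m - p k := by
  have h := Finset.sum_Ioc_consecutive (f := fun i => p i - p (i - 1))
    (Nat.zero_le k) hk
  rw [← Finset.Icc_add_one_left_eq_Ioc] at h
  rw [← Finset.Icc_add_one_left_eq_Ioc, ← Finset.Icc_add_one_left_eq_Ioc] at h
  have h1 := tele_sum p k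
  have h2 := tele_sum p m
  simp only [Nat.succ_eq_add_one, Nat.zero_add] at h
  rw [h1, h2] at h
  linarith

theorem additive_performance_eq (m : ℕ) (hm : 1 ≤ m) (p : ℕ → ℝ) (x y a b : ℝ)
    (hx : x = p 0) (hy : y = p m)
    (ha_lb : ∀ k ≤ m, a ≤ p k) (ha_mem : ∃ k ≤ m, p k = a)
    (hb_ub : ∀ k ≤ m, p k ≤ b) (hb_mem : ∃ k ≤ m, p k = b) :
    IsGreatest
      {t : ℝ | ∃ k, 1 ≤ k ∧ k ≤ m ∧
        t = |(∑ i ∈ Finset.Icc 1 k, (p i - p (i - 1))) -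
             (∑ i ∈ Finset.Icc (k + 1) m, (p i - p (i - 1)))|}
      (max (2 * b - x - y) (x + y - 2 * a)) := by
  have key : ∀ k, k ≤ m →
      |(∑ i ∈ Finset.Icc 1 k, (p i - p (i - 1))) -
        (∑ i ∈ Finset.Icc (k + 1) m, (p i - p (i - 1)))| = |2 * p k - x - y| := by
    intro k hk
    rw [tele_sum p k, tele_sum2 p k m hk, hx, hy]
    ring_nf
  have hxb : x ≤ b := hx ▸ hb_ub 0 (Nat.zero_le m)
  have hyb : y ≤ b := hy ▸ hb_ub m le_rfl
  have hax : a ≤ x := hx ▸ ha_lb 0 (Nat.zero_le m)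
  have hay : a ≤ y := hy ▸ ha_lb m le_rfl
  constructor
  · -- membership
    rcases le_total (x + y - 2 * a) (2 * b - x - y) with hcase | hcase
    · rw [max_eq_left hcase]
      obtain ⟨kb, hkb, hpkb⟩ := hb_mem
      rcases Nat.eq_zero_or_pos kb with h0 | hpos
      · -- b = x, use k = m
        have hbx : b = x := by rw [hx, ← hpkb, h0]
        refine ⟨m, hm, le_rfl, ?_⟩
        rw [key m le_rfl]
        have : |2 * p m - x - y| = |y - x| := by rw [← hy]; congr 1; ring
        rw [this, abs_of_nonpos (by linarith [hyb] : y - x ≤ 0)]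
        linarith
      · refine ⟨kb, hpos, hkb, ?_⟩
        rw [key kb hkb, hpkb, abs_of_nonneg (by linarith : (0:ℝ) ≤ 2 * b - x - y)]
    · rw [max_eq_right hcase]
      obtain ⟨ka, hka, hpka⟩ := ha_mem
      rcases Nat.eq_zero_or_pos ka with h0 | hpos
      · have hax' : a = x := by rw [hx, ← hpka, h0]
        refine ⟨m, hm, le_rfl, ?_⟩
        rw [key m le_rfl]
        have : |2 * p m - x - y| = |y - x| := by rw [← hy]; congr 1; ring
        rw [this, abs_of_nonneg (by linarith [hay] : (0:ℝ) ≤ y - x)]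
        linarith
      · refine ⟨ka, hpos, hka, ?_⟩
        rw [key ka hka, hpka, abs_of_nonpos (by linarith : 2 * a - x - y ≤ 0)]
        ring
  · -- upper bound
    rintro t ⟨k, hk1, hkm, rfl⟩
    rw [key k hkm]
    have h1 := ha_lb k hkm
    have h2 := hb_ub k hkm
    rw [abs_le']
    constructor
    · exact le_max_of_le_left (by linarith)
    · simp only [le_max_iff]
      right
      linarith
end

section
/- For every positive integer m and nonnegative reals u_1,…,u_m and v_1,…,v_m with u_i + v_i ≤ 1 for all i, there exist z_1,…,z_m with z_k ∈ {v_k, −u_k} for each k such that for every k ∈ {1,…,m}: |∑_{i=1}^k z_i − ∑_{i=k+1}^m z_i| ≤ 3/2. -/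
noncomputable def sswS (u v : ℕ → ℝ) : ℕ → ℝ
  | 0 => 1/2
  | k+1 => if sswS u v k + v (k+1) ≤ 1 then sswS u v k + v (k+1) else sswS u v k - u (k+1)

theorem ssw_combinatorial (m : ℕ) (hm : 1 ≤ m) (u v : ℕ → ℝ)
    (hu : ∀ i ∈ Finset.Icc 1 m, 0 ≤ u i)
    (hv : ∀ i ∈ Finset.Icc 1 m, 0 ≤ v i)
    (huv : ∀ i ∈ Finset.Icc 1 m, u i + v i ≤ 1) :
    ∃ z : ℕ → ℝ, (∀ k ∈ Finset.Icc 1 m, z k = v k ∨ z k = -u k) ∧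
      ∀ k ∈ Finset.Icc 1 m,
        |(∑ i ∈ Finset.Icc 1 k, z i) - (∑ i ∈ Finset.Icc (k + 1) m, z i)| ≤ 3 / 2 := by
  set S := sswS u v with hS
  -- invariant
  have hinv : ∀ k, k ≤ m → 0 ≤ S k ∧ S k ≤ 1 := by
    intro k
    induction k with
    | zero => intro _; constructor <;> norm_num [hS, sswS]
    | succ n ih =>
      intro hn
      have hn' : n ≤ m := Nat.le_of_succ_le hn
      obtain ⟨h0, h1⟩ := ih hn'
      have hmem : n + 1 ∈ Finset.Icc 1 m := Finset.mem_Icc.mpr ⟨Nat.succ_le_succ (Nat.zero_le n), hn⟩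
      have hu' := hu _ hmem
      have hv' := hv _ hmem
      have huv' := huv _ hmem
      simp only [hS, sswS]
      split_ifs with h
      · exact ⟨by linarith, h⟩
      · push_neg at h
        constructor <;> linarith
  refine ⟨fun k => S k - S (k - 1), ?_, ?_⟩
  · intro k hk
    obtain ⟨hk1, _⟩ := Finset.mem_Icc.mp hk
    obtain ⟨n, rfl⟩ := Nat.exists_eq_add_of_le hk1
    simp only [hS, Nat.add_sub_cancel_left]
    rw [show 1 + n = n + 1 by ring]
    simp only [sswS]
    split_ifs
    · left; ring
    · right; ring
  · intro k hk
    obtain ⟨hk1, hkm⟩ := Finset.mem_Icc.mp hk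
    have key : ∀ j, ∑ i ∈ Finset.Icc 1 j, (S i - S (i - 1)) = S j - S 0 := by
      intro j
      induction j with
      | zero => simp
      | succ n ih =>
        rw [Finset.sum_Icc_succ_top (Nat.succ_le_succ (Nat.zero_le n)), ih]
        simp only [Nat.add_sub_cancel]
        ring
    rw [show Finset.Icc (k+1) m = Finset.Ioc k m from Finset.Icc_add_one_left_eq_Ioc k m]
    have split : ∑ i ∈ Finset.Ioc k m, (S i - S (i - 1))
        = (S m - S 0) - (S k - S 0) := by
      have := Finset.sum_Ioc_consecutive (fun i => S i - S (i - 1))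
        (Nat.zero_le k) hkm
      have e1 : Finset.Ioc 0 k = Finset.Icc 1 k := (Finset.Icc_add_one_left_eq_Ioc 0 k).symm
      have e2 : Finset.Ioc 0 m = Finset.Icc 1 m := (Finset.Icc_add_one_left_eq_Ioc 0 m).symm
      rw [e1, e2, key k, key m] at this
      linarith
    rw [key k, split]
    have hS0 : S 0 = 1/2 := rfl
    obtain ⟨hk0, hk1'⟩ := hinv k (le_trans hkm le_rfl) |>.imp id id
    have hkk := hinv k hkm
    have hmm := hinv m le_rfl
    rw [abs_le]
    constructor <;> [skip; skip] <;> · rw [hS0]; nlinarith [hkk.1, hkk.2, hmm.1, hmm.2]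
end
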